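/- With F and G as defined (F(t) = ((t^2-1)/(2t)) ln|(t+1)/(t-1)| + 1 and G(t) = ((3t^4-2t^2-1)/(8t^3)) ln|(t+1)/(t-1)| + 1/(4t^2) + 7/12), one has d/dt [ (4t/3) - t·G(1/t) ] = t·F'(1/t) for all t > 0, t ≠ 1. -/

import Mathlib

/-!
Since `(1/t + 1) / (1/t - 1) = (1 + t) / (1 - t)`, the logarithm `log |(t + 1) / (t - 1)|` occurring in
`G` and `Fderiv` is invariant under `t ↦ 1/t`. Hence `s * G (1/s)` is a polynomial plus a polynomial
multiple of that same logarithm, and the claim is a derivative computation using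
`d/dt log |(t + 1) / (t - 1)| = -2 / (t ^ 2 - 1)`.
-/

noncomputable def G (t : ℝ) : ℝ :=
  ((3 * t ^ 4 - 2 * t ^ 2 - 1) / (8 * t ^ 3)) * Real.log (|(t + 1) / (t - 1)|)
    + 1 / (4 * t ^ 2) + 7 / 12

noncomputable def Fderiv (t : ℝ) : ℝ :=
  ((t ^ 2 + 1) / (2 * t ^ 2)) * Real.log (|(t + 1) / (t - 1)|) - 1 / t

noncomputable def logAbsRatio (t : ℝ) : ℝ := Real.log |(t + 1) / (t - 1)|

theorem G_eq (t : ℝ) :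
    G t = (3 * t ^ 4 - 2 * t ^ 2 - 1) / (8 * t ^ 3) * logAbsRatio t + 1 / (4 * t ^ 2) + 7 / 12 :=
  rfl

theorem Fderiv_eq (t : ℝ) : Fderiv t = (t ^ 2 + 1) / (2 * t ^ 2) * logAbsRatio t - 1 / t :=
  rfl

theorem logAbsRatio_inv (t : ℝ) : logAbsRatio t⁻¹ = logAbsRatio t := by
  rcases eq_or_ne t 0 with rfl | ht
  · simp
  have h : (t⁻¹ + 1) / (t⁻¹ - 1) = (1 + t) / (1 - t) := by
    rw [← mul_div_mul_left _ _ ht, mul_add, mul_sub, mul_inv_cancel₀ ht, mul_one]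
  rw [logAbsRatio, logAbsRatio, h, abs_div, abs_div, abs_sub_comm, add_comm]

theorem hasDerivAt_logAbsRatio {t : ℝ} (ht : t ≠ 1) (ht' : t ≠ -1) :
    HasDerivAt logAbsRatio (-2 / (t ^ 2 - 1)) t := by
  have hsub : t - 1 ≠ 0 := sub_ne_zero.mpr ht
  have hadd : t + 1 ≠ 0 := by rwa [← sub_neg_eq_add, sub_ne_zero]
  have hsq : t ^ 2 - 1 ≠ 0 := sub_ne_zero.mpr (sq_ne_one_iff.mpr ⟨ht, ht'⟩)
  have hratio : HasDerivAt (fun s => (s + 1) / (s - 1)) ((1 * (t - 1) - (t + 1) * 1) / (t - 1) ^ 2) t :=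
    ((hasDerivAt_id t).add_const 1).div ((hasDerivAt_id t).sub_const 1) hsub
  have hlog := hratio.log (div_ne_zero hadd hsub)
  convert hlog using 1
  · funext s
    exact Real.log_abs _
  · field_simp
    ring

theorem mul_G_inv {s : ℝ} (hs : s ≠ 0) :
    s * G s⁻¹ = (3 - 2 * s ^ 2 - s ^ 4) / 8 * logAbsRatio s + s ^ 3 / 4 + 7 * s / 12 := by
  rw [G_eq, logAbsRatio_inv]
  field_simp

theorem mul_Fderiv_inv {t : ℝ} (ht : t ≠ 0) :
    t * Fderiv t⁻¹ = t * (t ^ 2 + 1) / 2 * logAbsRatio t - t ^ 2 := by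
  rw [Fderiv_eq, logAbsRatio_inv]
  field_simp
  ring

theorem hasDerivAt_poly_add_mul_logAbsRatio {t : ℝ} (ht : t ≠ 1) (ht' : t ≠ -1) :
    HasDerivAt (fun s => (3 * s - s ^ 3) / 4 + (s ^ 2 + 3) * (s ^ 2 - 1) / 8 * logAbsRatio s)
      (t * (t ^ 2 + 1) / 2 * logAbsRatio t - t ^ 2) t := by
  have hpoly : HasDerivAt (fun s : ℝ => (3 * s - s ^ 3) / 4) ((3 - 3 * t ^ 2) / 4) t :=
    (((hasDerivAt_id t).const_mul 3).sub (hasDerivAt_pow 3 t)).div_const 4 |>.congr_deriv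
      (by simp)
  have hcoeff : HasDerivAt (fun s : ℝ => (s ^ 2 + 3) * (s ^ 2 - 1) / 8) ((4 * t ^ 3 + 4 * t) / 8) t :=
    (((hasDerivAt_pow 2 t).add_const 3).mul ((hasDerivAt_pow 2 t).sub_const 1)).div_const 8
      |>.congr_deriv (by push_cast; ring)
  have hsq : t ^ 2 - 1 ≠ 0 := sub_ne_zero.mpr (sq_ne_one_iff.mpr ⟨ht, ht'⟩)
  refine (hpoly.add (hcoeff.mul (hasDerivAt_logAbsRatio ht ht'))).congr_deriv ?_
  field_simp
  ring

theorem deriv_aux (t : ℝ) (ht : 0 < t) (ht1 : t ≠ 1) :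
    HasDerivAt (fun s : ℝ => 4 * s / 3 - s * G (1 / s)) (t * Fderiv (1 / t)) t := by
  have hsimplify : (fun s : ℝ => 4 * s / 3 - s * G (1 / s)) =ᶠ[nhds t]
      fun s => (3 * s - s ^ 3) / 4 + (s ^ 2 + 3) * (s ^ 2 - 1) / 8 * logAbsRatio s := by
    filter_upwards [isOpen_ne.mem_nhds ht.ne'] with s hs
    rw [one_div, mul_G_inv hs]
    ring
  rw [one_div, mul_Fderiv_inv ht.ne']
  exact (hasDerivAt_poly_add_mul_logAbsRatio ht1 (by linarith)).congr_of_eventuallyEq hsimplify
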